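/- Let n ≥ 2, let ⊤ denote the largest element of Fin n, and let σ, τ be permutations of Fin n each satisfying ℓ(σ) + ℓ(σ⁻¹ * s) = n − 1 and ℓ(τ) + ℓ(τ⁻¹ * s) = n − 1, where s is the n-cycle i ↦ i + 1 (mod n). Suppose τ(⊤) = ⊤ and σ(⊤) = i with i ≠ ⊤. Set σ' = (Equiv.swap i ⊤) * σ. Then: σ'(⊤) = ⊤; σ' satisfies ℓ(σ') + ℓ(σ'⁻¹ * s) = n − 1; σ⁻¹ * σ' is a transposition; c(σ'⁻¹ * τ) = c(σ⁻¹ * τ) + 1; and ℓ(σ'⁻¹ * τ) = ℓ(σ⁻¹ * τ) − 1. -/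

import Mathlib

/-- Minimal number of transpositions whose product is `σ` (0 for the identity);
this is the graph distance from the identity to `σ` in the Cayley graph of the
symmetric group on `Fin n` generated by all transpositions. -/
noncomputable def swapLength (n : ℕ) (σ : Equiv.Perm (Fin n)) : ℕ :=
  sInf {k | ∃ l : List (Equiv.Perm (Fin n)),
    l.length = k ∧ (∀ t ∈ l, t.IsSwap) ∧ l.prod = σ}

/-- Number of orbits of `σ` acting on `Fin n` (fixed points count as orbits). -/
noncomputable def orbitCount (n : ℕ) (σ : Equiv.Perm (Fin n)) : ℕ :=
  Nat.card (MulAction.orbitRel.Quotient (Subgroup.zpowers σ) (Fin n))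

/-!
Write `c(π)` for the number of cycles of `π`. Multiplying `π` on the left by `swap a b` leaves
every cycle through neither `a` nor `b` untouched, so it changes `c` by at most one, and it
raises `c` by exactly one when `b = π a ≠ a`, since it then splits `a` off its cycle. Hence
`ℓ(π) = n - c(π)` (Cayley), and `ℓ` satisfies the triangle inequality.

With `σ' = swap (σ ⊤) ⊤ * σ` both `σ'` and `σ'⁻¹ * τ = swap ⊤ (σ⁻¹ ⊤) * (σ⁻¹ * τ)` are such
splittings, because `(σ⁻¹ * τ) ⊤ = σ⁻¹ ⊤ ≠ ⊤`. So `ℓ(σ') = ℓ(σ) - 1` and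
`ℓ(σ'⁻¹ * s) ≤ ℓ(σ⁻¹ * s) + 1`, while the triangle inequality through `σ'` bounds
`ℓ(σ') + ℓ(σ'⁻¹ * s)` below by `ℓ(s) = n - 1`.
-/

theorem Set.ncard_image_eq_ncard_image {ι β γ : Type*} {f : ι → β} {g : ι → γ} {s : Set ι}
    (h : ∀ x ∈ s, ∀ y ∈ s, f x = f y ↔ g x = g y) : (f '' s).ncard = (g '' s).ncard := by
  refine Set.ncard_congr (fun q hq => g hq.choose) (fun q hq => ⟨_, hq.choose_spec.1, rfl⟩)
    (fun q r hq hr hqr => ?_) ?_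
  · rw [← hq.choose_spec.2, ← hr.choose_spec.2]
    exact (h _ hq.choose_spec.1 _ hr.choose_spec.1).2 hqr
  · rintro _ ⟨x, hx, rfl⟩
    have hfx : f x ∈ f '' s := ⟨x, hx, rfl⟩
    exact ⟨f x, hfx, (h _ hfx.choose_spec.1 _ hx).1 hfx.choose_spec.2⟩

theorem Set.ncard_pair_pos {β : Type*} (p q : β) : 0 < ({p, q} : Set β).ncard :=
  (Set.ncard_pos (Set.toFinite _)).2 (Set.insert_nonempty p {q})

theorem Set.ncard_pair_le {β : Type*} (p q : β) : ({p, q} : Set β).ncard ≤ 2 :=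
  (Set.ncard_insert_le p {q}).trans (by rw [Set.ncard_singleton])

namespace Equiv.Perm

variable {α : Type*}

noncomputable def cycleCount (σ : Perm α) : ℕ :=
  Nat.card (Quotient (SameCycle.setoid σ))

theorem orbitRel_zpowers_eq (σ : Perm α) :
    MulAction.orbitRel (Subgroup.zpowers σ) α = SameCycle.setoid σ := by
  ext x y
  rw [MulAction.orbitRel_apply, MulAction.mem_orbit_iff]
  constructor
  · rintro ⟨⟨_, k, rfl⟩, h⟩
    exact ⟨-k, by rw [← h, zpow_neg]; exact (σ ^ k).symm_apply_apply y⟩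
  · rintro ⟨k, h⟩
    exact ⟨⟨σ ^ (-k), k.neg, rfl⟩, by simp [← h]⟩

theorem cycleCount_one : cycleCount (1 : Perm α) = Nat.card α :=
  (Nat.card_congr (Equiv.ofBijective _ ⟨fun _ _ h => sameCycle_one.1 (Quotient.exact h),
    Quotient.mk_surjective⟩)).symm

theorem swap_mul_pow_apply_of_not_sameCycle [DecidableEq α] {σ : Perm α} {a b x : α}
    (ha : ¬σ.SameCycle x a) (hb : ¬σ.SameCycle x b) (k : ℕ) :
    ((swap a b * σ) ^ k) x = (σ ^ k) x := by
  induction k with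
  | zero => rfl
  | succ k ih =>
    have hk : σ.SameCycle x (σ ((σ ^ k) x)) :=
      sameCycle_apply_right.2 (SameCycle.refl σ x).pow_right
    rw [pow_succ', mul_apply, ih, pow_succ', mul_apply, mul_apply,
      swap_apply_of_ne_of_ne (by rintro rfl; exact ha hk) (by rintro rfl; exact hb hk)]

section Finite

variable [Finite α]

theorem cycleCount_le_card (σ : Perm α) : cycleCount σ ≤ Nat.card α :=
  Nat.card_le_card_of_surjective _ Quotient.mk_surjective

theorem cycleCount_le_one_of_forall_sameCycle {σ : Perm α} (h : ∀ x y, σ.SameCycle x y) :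
    cycleCount σ ≤ 1 :=
  Finite.card_le_one_iff_subsingleton.2 ⟨Quotient.ind₂ fun x y => Quotient.sound (h x y)⟩

theorem cycleCount_eq_ncard_add_ncard (σ : Perm α) (a b : α) :
    cycleCount σ = (Quotient.mk (SameCycle.setoid σ) ''
        {x | ¬σ.SameCycle x a ∧ ¬σ.SameCycle x b}).ncard +
      ({Quotient.mk _ a, Quotient.mk _ b} : Set (Quotient (SameCycle.setoid σ))).ncard := by
  rw [cycleCount, ← Set.ncard_univ, ← Set.ncard_union_eq]
  · refine congrArg _ (Set.eq_univ_of_forall fun q => ?_).symm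
    induction q using Quotient.inductionOn with | h x => ?_
    by_cases hx : ¬σ.SameCycle x a ∧ ¬σ.SameCycle x b
    · exact Or.inl ⟨x, hx, rfl⟩
    · rw [not_and_or, not_not, not_not] at hx
      exact Or.inr (hx.imp Quotient.sound Quotient.sound)
  · rw [Set.disjoint_left]
    rintro _ ⟨x, hx, rfl⟩ (h | h)
    exacts [hx.1 (Quotient.exact h), hx.2 (Quotient.exact h)]

section Swap

variable [DecidableEq α] {σ : Perm α} {a b x : α}

theorem sameCycle_swap_mul_iff_of_not_sameCycle (ha : ¬σ.SameCycle x a)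
    (hb : ¬σ.SameCycle x b) (y : α) : (swap a b * σ).SameCycle x y ↔ σ.SameCycle x y := by
  constructor <;> intro h <;> obtain ⟨k, rfl⟩ := h.exists_nat_pow_eq
  · rw [swap_mul_pow_apply_of_not_sameCycle ha hb]
    exact (SameCycle.refl σ x).pow_right
  · rw [← swap_mul_pow_apply_of_not_sameCycle ha hb]
    exact (SameCycle.refl _ x).pow_right

theorem not_sameCycle_swap_mul_iff :
    (¬(swap a b * σ).SameCycle x a ∧ ¬(swap a b * σ).SameCycle x b) ↔
      (¬σ.SameCycle x a ∧ ¬σ.SameCycle x b) := by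
  refine ⟨fun h => ?_, fun h => ?_⟩
  · have h' := sameCycle_swap_mul_iff_of_not_sameCycle h.1 h.2
    rw [swap_mul_self_mul] at h'
    exact ⟨(h' a).not.2 h.1, (h' b).not.2 h.2⟩
  · have h' := sameCycle_swap_mul_iff_of_not_sameCycle h.1 h.2
    exact ⟨(h' a).not.2 h.1, (h' b).not.2 h.2⟩

/-- The cycles through neither `a` nor `b` are common to `σ` and `swap a b * σ`; the pairs count
the remaining ones. -/
theorem cycleCount_swap_mul_add_ncard (σ : Perm α) (a b : α) :
    cycleCount (swap a b * σ) +
        ({Quotient.mk _ a, Quotient.mk _ b} : Set (Quotient (SameCycle.setoid σ))).ncard =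
      cycleCount σ + ({Quotient.mk _ a, Quotient.mk _ b} :
        Set (Quotient (SameCycle.setoid (swap a b * σ)))).ncard := by
  have hoff : {x | ¬(swap a b * σ).SameCycle x a ∧ ¬(swap a b * σ).SameCycle x b} =
      {x | ¬σ.SameCycle x a ∧ ¬σ.SameCycle x b} :=
    Set.ext fun _ => not_sameCycle_swap_mul_iff
  have hcard := Set.ncard_image_eq_ncard_image (f := Quotient.mk (SameCycle.setoid σ))
    (g := Quotient.mk (SameCycle.setoid (swap a b * σ)))
    (s := {x | ¬σ.SameCycle x a ∧ ¬σ.SameCycle x b}) fun x hx y _ => by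
      rw [Quotient.eq, Quotient.eq]
      exact (sameCycle_swap_mul_iff_of_not_sameCycle hx.1 hx.2 y).symm
  rw [cycleCount_eq_ncard_add_ncard σ a b, cycleCount_eq_ncard_add_ncard (swap a b * σ) a b,
    hoff, hcard]
  omega

theorem cycleCount_le_cycleCount_swap_mul_add_one (σ : Perm α) (a b : α) :
    cycleCount σ ≤ cycleCount (swap a b * σ) + 1 := by
  have := cycleCount_swap_mul_add_ncard σ a b
  have := Set.ncard_pair_le (Quotient.mk (SameCycle.setoid σ) a) (Quotient.mk _ b)
  have := Set.ncard_pair_pos (Quotient.mk (SameCycle.setoid (swap a b * σ)) a) (Quotient.mk _ b)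
  omega

theorem cycleCount_swap_mul_apply (hx : σ x ≠ x) :
    cycleCount (swap x (σ x) * σ) = cycleCount σ + 1 := by
  have hsame : Quotient.mk (SameCycle.setoid σ) x = Quotient.mk _ (σ x) :=
    Quotient.sound (sameCycle_apply_right.2 (SameCycle.refl σ x))
  have hfix : (swap x (σ x) * σ) x = x := by simp
  have hsplit : Quotient.mk (SameCycle.setoid (swap x (σ x) * σ)) x ≠ Quotient.mk _ (σ x) :=
    fun h => hx ((Quotient.exact h).eq_of_left hfix).symm
  have := cycleCount_swap_mul_add_ncard σ x (σ x)
  rw [hsame, Set.pair_eq_singleton, Set.ncard_singleton, Set.ncard_pair hsplit] at this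
  omega

theorem card_le_cycleCount_prod_add_length {l : List (Perm α)} (hl : ∀ t ∈ l, t.IsSwap) :
    Nat.card α ≤ cycleCount l.prod + l.length := by
  induction l with
  | nil => simp [cycleCount_one]
  | cons t l ih =>
    obtain ⟨a, b, -, rfl⟩ := hl t List.mem_cons_self
    have := ih fun u hu => hl u (List.mem_cons_of_mem _ hu)
    have := cycleCount_le_cycleCount_swap_mul_add_one l.prod a b
    rw [List.prod_cons, List.length_cons]
    omega

theorem exists_isSwap_prod_eq_length_add_cycleCount (σ : Perm α) :
    ∃ l : List (Perm α), (∀ t ∈ l, t.IsSwap) ∧ l.prod = σ ∧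
      l.length + cycleCount σ = Nat.card α := by
  by_cases h : σ = 1
  · exact ⟨[], by simp, by simp [h], by simp [h, cycleCount_one]⟩
  obtain ⟨x, hx⟩ : ∃ x, σ x ≠ x := by
    by_contra! hfix
    exact h (ext hfix)
  have hsplit := cycleCount_swap_mul_apply hx
  have := cycleCount_le_card (swap x (σ x) * σ)
  obtain ⟨l, hl, hprod, hlen⟩ := exists_isSwap_prod_eq_length_add_cycleCount (swap x (σ x) * σ)
  refine ⟨swap x (σ x) :: l, ?_, by rw [List.prod_cons, hprod, swap_mul_self_mul], ?_⟩
  · exact List.forall_mem_cons.2 ⟨⟨x, σ x, hx.symm, rfl⟩, hl⟩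
  · rw [List.length_cons]
    omega
termination_by Nat.card α - cycleCount σ
decreasing_by
  have := cycleCount_le_card (swap x (σ x) * σ)
  omega

end Swap

end Finite

end Equiv.Perm

open Equiv Equiv.Perm

theorem orbitCount_eq_cycleCount {n : ℕ} (σ : Perm (Fin n)) :
    orbitCount n σ = cycleCount σ := by
  rw [orbitCount, MulAction.orbitRel.Quotient, orbitRel_zpowers_eq, cycleCount]

theorem cycleCount_finRotate_le_one (n : ℕ) : cycleCount (finRotate n) ≤ 1 := by
  refine cycleCount_le_one_of_forall_sameCycle fun x y => ?_
  rcases lt_or_ge n 2 with hn | hn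
  · rw [Fin.ext (by omega : (x : ℕ) = y)]
  · have hmoved (z : Fin n) : finRotate n z ≠ z :=
      mem_support.1 (by simp [support_finRotate_of_le hn])
    exact (isCycle_finRotate_of_le hn).sameCycle (hmoved x) (hmoved y)

theorem swapLength_le {n : ℕ} {l : List (Perm (Fin n))} (hl : ∀ t ∈ l, t.IsSwap) :
    swapLength n l.prod ≤ l.length :=
  Nat.sInf_le ⟨l, rfl, hl, rfl⟩

theorem swapLength_eq_sub_cycleCount {n : ℕ} (σ : Perm (Fin n)) :
    swapLength n σ = n - cycleCount σ := by
  obtain ⟨l, hl, rfl, hlen⟩ := exists_isSwap_prod_eq_length_add_cycleCount σ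
  rw [Nat.card_fin] at hlen
  refine le_antisymm ((swapLength_le hl).trans (by omega)) ?_
  obtain ⟨m, hm_len, hm, hm_prod⟩ := Nat.sInf_mem (⟨l.length, l, rfl, hl, rfl⟩ :
    {k | ∃ m : List (Perm (Fin n)), m.length = k ∧ (∀ t ∈ m, t.IsSwap) ∧ m.prod = l.prod}.Nonempty)
  have := card_le_cycleCount_prod_add_length hm
  rw [hm_prod, Nat.card_fin, hm_len] at this
  rw [swapLength]
  omega

theorem sub_one_le_swapLength_finRotate (n : ℕ) : n - 1 ≤ swapLength n (finRotate n) := by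
  have := cycleCount_finRotate_le_one n
  rw [swapLength_eq_sub_cycleCount]
  omega

theorem swapLength_swap_mul_le {n : ℕ} (π : Perm (Fin n)) (a b : Fin n) :
    swapLength n (swap a b * π) ≤ swapLength n π + 1 := by
  have := cycleCount_le_cycleCount_swap_mul_add_one π a b
  rw [swapLength_eq_sub_cycleCount, swapLength_eq_sub_cycleCount]
  omega

theorem swapLength_swap_mul_apply_add_one {n : ℕ} {π : Perm (Fin n)} {x : Fin n} (hx : π x ≠ x) :
    swapLength n (swap x (π x) * π) + 1 = swapLength n π := by
  have := cycleCount_le_card (swap x (π x) * π)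
  rw [Nat.card_fin, cycleCount_swap_mul_apply hx] at this
  rw [swapLength_eq_sub_cycleCount, swapLength_eq_sub_cycleCount, cycleCount_swap_mul_apply hx]
  omega

theorem swapLength_mul_le {n : ℕ} (σ τ : Perm (Fin n)) :
    swapLength n (σ * τ) ≤ swapLength n σ + swapLength n τ := by
  obtain ⟨l, hl, rfl, hlen⟩ := exists_isSwap_prod_eq_length_add_cycleCount σ
  obtain ⟨m, hm, rfl, hmen⟩ := exists_isSwap_prod_eq_length_add_cycleCount τ
  rw [Nat.card_fin] at hlen hmen
  calc swapLength n (l.prod * m.prod) = swapLength n (l ++ m).prod := by rw [List.prod_append]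
    _ ≤ (l ++ m).length := swapLength_le fun t ht => (List.mem_append.1 ht).elim (hl t) (hm t)
    _ = swapLength n l.prod + swapLength n m.prod := by
      rw [swapLength_eq_sub_cycleCount, swapLength_eq_sub_cycleCount, List.length_append]
      omega

theorem reduction_step_general (n : ℕ) (top : Fin n)
    (σ τ : Equiv.Perm (Fin n))
    (hσ : swapLength n σ + swapLength n (σ⁻¹ * finRotate n) = n - 1)
    (hτtop : τ top = top) (i : Fin n) (hσtop : σ top = i) (hi : i ≠ top) :
    (Equiv.swap i top * σ) top = top ∧
    swapLength n (Equiv.swap i top * σ) +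
        swapLength n ((Equiv.swap i top * σ)⁻¹ * finRotate n) = n - 1 ∧
    (∃ a b : Fin n, a ≠ b ∧ σ⁻¹ * (Equiv.swap i top * σ) = Equiv.swap a b) ∧
    orbitCount n ((Equiv.swap i top * σ)⁻¹ * τ) = orbitCount n (σ⁻¹ * τ) + 1 ∧
    swapLength n ((Equiv.swap i top * σ)⁻¹ * τ) = swapLength n (σ⁻¹ * τ) - 1 := by
  subst hσtop
  set σ' := swap (σ top) top * σ
  have hconj : σ⁻¹ * swap (σ top) top = swap top (σ⁻¹ top) * σ⁻¹ := by
    rw [mul_swap_eq_swap_mul, Perm.coe_inv, symm_apply_apply]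
  have hinv : σ'⁻¹ = swap top (σ⁻¹ top) * σ⁻¹ := by rw [mul_inv_rev, swap_inv, hconj]
  have hmoved : σ⁻¹ top ≠ top := fun h => hi (eq_inv_iff_eq.1 h.symm)
  have hτ_top : (σ⁻¹ * τ) top = σ⁻¹ top := by rw [mul_apply, hτtop]
  have hsplitσ : swapLength n σ' + 1 = swapLength n σ := by
    rw [show σ' = swap top (σ top) * σ from congrArg (· * σ) (swap_comm _ _)]
    exact swapLength_swap_mul_apply_add_one hi
  have hsplitτ : σ'⁻¹ * τ = swap top ((σ⁻¹ * τ) top) * (σ⁻¹ * τ) := by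
    rw [hinv, mul_assoc, hτ_top]
  refine ⟨by simp [σ'], le_antisymm ?_ ?_, ⟨top, σ⁻¹ top, hmoved.symm, ?_⟩, ?_, ?_⟩
  · have := swapLength_swap_mul_le (σ⁻¹ * finRotate n) top (σ⁻¹ top)
    rw [hinv, mul_assoc]
    omega
  · calc n - 1 ≤ swapLength n (finRotate n) := sub_one_le_swapLength_finRotate n
      _ ≤ _ := by simpa using swapLength_mul_le σ' (σ'⁻¹ * finRotate n)
  · rw [← mul_assoc, hconj, inv_mul_cancel_right]
  · rw [orbitCount_eq_cycleCount, orbitCount_eq_cycleCount, hsplitτ,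
      cycleCount_swap_mul_apply (hτ_top ▸ hmoved)]
  · have := swapLength_swap_mul_apply_add_one (π := σ⁻¹ * τ) (hτ_top ▸ hmoved)
    rw [hsplitτ]
    omega

/-- The reduction step: if `σ, τ` lie in the interval from `e` to `s`, `τ` fixes
the top element of `Fin n` but `σ` sends it to `i ≠ ⊤`, then
`σ' = (swap i ⊤) * σ` fixes `⊤`, lies in the interval, is one Cayley step from
`σ`, and the system of meanders of `(σ', τ)` has exactly one more component
than that of `(σ, τ)`, so `σ'` is one step closer to `τ`. -/
theorem reduction_step (n : ℕ) (hn : 2 ≤ n) (top : Fin n)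
    (htop : (top : ℕ) = n - 1) (σ τ : Equiv.Perm (Fin n))
    (hσ : swapLength n σ + swapLength n (σ⁻¹ * finRotate n) = n - 1)
    (hτ : swapLength n τ + swapLength n (τ⁻¹ * finRotate n) = n - 1)
    (hτtop : τ top = top) (i : Fin n) (hσtop : σ top = i) (hi : i ≠ top) :
    (Equiv.swap i top * σ) top = top ∧
    swapLength n (Equiv.swap i top * σ) +
        swapLength n ((Equiv.swap i top * σ)⁻¹ * finRotate n) = n - 1 ∧
    (∃ a b : Fin n, a ≠ b ∧ σ⁻¹ * (Equiv.swap i top * σ) = Equiv.swap a b) ∧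
    orbitCount n ((Equiv.swap i top * σ)⁻¹ * τ) = orbitCount n (σ⁻¹ * τ) + 1 ∧
    swapLength n ((Equiv.swap i top * σ)⁻¹ * τ) = swapLength n (σ⁻¹ * τ) - 1 :=
  reduction_step_general n top σ τ hσ hτtop i hσtop hi
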